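/- arXiv:2109.08222 — 5 statements merged into one kernel-verified Lean document; each statement's English description precedes it below -/
import Mathlib

section
/- Fix α ∈ (0,1/2) and γ ∈ (0,α). There exists a function c : [0,1) → [0, z_{1−γ}] such that for every ω ∈ [0,1), P(Z1 > min{z_{1−α+γ}, Z̃2 + c(ω)}) = α, where (Z1, Z̃2) is the centered bivariate Gaussian vector associated with ω; moreover c is continuous on [0,1) and c(0) = z_{1−α}. -/
/-!
With `D = Z₁ - Z̃₂ ∼ N(0, 1 - ω)`, the rejection event is `{Z₁ > z_{1-α+γ}} ∪ {D > c}`. Its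
probability `F(ω, c)` is jointly continuous for `ω < 1`, because the boundaries
`{Z₁ = z_{1-α+γ}}` and `{D = c}` are null. At `c = 0` it is at least `P(D > 0) = 1/2 > α`; at `c = z_{1-γ} ≥ 0` it is at
most `(α - γ) + γ = α`, since `N(0, 1 - ω)` puts less mass than `N(0, 1)` above a nonnegative
level. So the intermediate value theorem gives a root `c(ω) ∈ [0, z_{1-γ}]`. The root is unique:
for `ω > 0`, `F(ω, ·)` is strictly decreasing, and `F(0, c) = P(Z₁ > min(z_{1-α+γ}, c))`, which
forces `c(0) = z_{1-α}`. A unique root in a compact set of an equation that is continuous in the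
parameter depends continuously on it.
-/

open MeasureTheory ProbabilityTheory Real

noncomputable def stdNormal : Measure ℝ := gaussianReal 0 1

noncomputable def stdNormal2 : Measure (ℝ × ℝ) := stdNormal.prod stdNormal

/-- For `ω ∈ [0,1)`, the pair `(Z₁, Z̃₂)` with `Z₁ p = p.1` and
`Z̃₂ p = ω * p.1 + √(ω - ω²) * p.2` is, under `stdNormal2`, a centered bivariate Gaussian
vector with covariance matrix `[[1, ω], [ω, ω]]`. -/
noncomputable def Ztilde2 (ω : ℝ) (p : ℝ × ℝ) : ℝ := ω * p.1 + Real.sqrt (ω - ω ^ 2) * p.2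

open Filter Topology Set
open scoped NNReal ENNReal

instance : IsProbabilityMeasure stdNormal := by unfold stdNormal; infer_instance

instance : IsProbabilityMeasure stdNormal2 := by unfold stdNormal2; infer_instance

instance : stdNormal.IsOpenPosMeasure :=
  (gaussianReal_absolutelyContinuous' 0 one_ne_zero).isOpenPosMeasure

instance : NullSingletonClass stdNormal := nullSingletonClass_gaussianReal one_ne_zero

instance : stdNormal2.IsOpenPosMeasure := by unfold stdNormal2; infer_instance

lemma map_stdNormal2_linear (a b : ℝ) :
    stdNormal2.map (fun p => a * p.1 + b * p.2) =
      gaussianReal 0 (a ^ 2 + b ^ 2).toNNReal := by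
  have hmap : ∀ (c : ℝ) (f : ℝ × ℝ → ℝ), Measurable f → stdNormal2.map f = stdNormal →
      stdNormal2.map (fun p => c * f p) = gaussianReal 0 (c ^ 2).toNNReal := by
    intro c f hf hlaw
    rw [← Function.comp_def (c * ·) f, ← Measure.map_map (measurable_const_mul c) hf, hlaw,
      stdNormal, gaussianReal_map_const_mul, mul_zero, mul_one]
    congr 1
    exact NNReal.eq (by simp [sq_nonneg])
  have hindep : IndepFun (fun p : ℝ × ℝ => a * p.1) (fun p => b * p.2) stdNormal2 :=
    indepFun_prod (measurable_const_mul a) (measurable_const_mul b)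
  have := gaussianReal_add_gaussianReal_of_indepFun hindep
    (hmap a Prod.fst measurable_fst (Measure.map_fst_prod.trans (by simp)))
    (hmap b Prod.snd measurable_snd (Measure.map_snd_prod.trans (by simp)))
  rwa [add_zero, ← Real.toNNReal_add (sq_nonneg a) (sq_nonneg b)] at this

lemma gaussianReal_Ioi_le_of_le_one {v : ℝ≥0} (hv : v ≤ 1) {c : ℝ} (hc : 0 ≤ c) :
    gaussianReal 0 v (Ioi c) ≤ gaussianReal 0 1 (Ioi c) := by
  have hlaw : (gaussianReal 0 1).map (√v * ·) = gaussianReal 0 v := by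
    rw [gaussianReal_map_const_mul, mul_zero, mul_one]
    congr 1
    exact NNReal.eq (by simp)
  have hsqrt : √(v : ℝ) ≤ 1 := Real.sqrt_le_one.mpr (by exact_mod_cast hv)
  rw [← hlaw, Measure.map_apply (measurable_const_mul _) measurableSet_Ioi]
  refine measure_mono fun x (hx : c < √v * x) => ?_
  have hx0 : 0 ≤ x := by
    by_contra! hneg
    nlinarith [Real.sqrt_nonneg (v : ℝ)]
  exact hx.trans_le (mul_le_of_le_one_left hx0 hsqrt)

lemma gaussianReal_zero_Ioi_zero {v : ℝ≥0} (hv : v ≠ 0) : gaussianReal 0 v (Ioi 0) = 2⁻¹ := by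
  have := nullSingletonClass_gaussianReal (μ := 0) hv
  have hsymm : gaussianReal 0 v (Iio 0) = gaussianReal 0 v (Ioi 0) := by
    conv_lhs =>
      rw [← neg_zero, ← gaussianReal_map_neg, Measure.map_apply measurable_neg measurableSet_Iio]
    simp
  have htotal : gaussianReal 0 v (Iio 0) + gaussianReal 0 v (Ioi 0) = 1 := by
    rw [← measure_union Ioi_disjoint_Iio_same.symm measurableSet_Ioi, Iio_union_Ioi,
      prob_compl_eq_one_sub (measurableSet_singleton 0), measure_singleton, tsub_zero]
  rw [hsymm, ← two_mul] at htotal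
  exact ENNReal.eq_inv_of_mul_eq_one_left (by rwa [mul_comm])

lemma measure_Ioi_strictAnti (μ : Measure ℝ) [IsFiniteMeasure μ] [μ.IsOpenPosMeasure] :
    StrictAnti fun t => μ (Ioi t) := by
  intro s t hst
  have hsplit : μ (Ioi s) = μ (Ioi t) + μ (Ioc s t) := by
    rw [add_comm, ← measure_union (Ioc_disjoint_Ioi le_rfl) measurableSet_Ioi,
      Ioc_union_Ioi_eq_Ioi hst.le]
  have hpos : 0 < μ (Ioc s t) :=
    (isOpen_Ioo.measure_pos μ (nonempty_Ioo.mpr hst)).trans_le (measure_mono Ioo_subset_Ioc_self)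
  show μ (Ioi t) < μ (Ioi s)
  rw [hsplit]
  exact ENNReal.lt_add_right (measure_ne_top _ _) hpos.ne'

lemma prob_Ioi_eq_ofReal_one_sub {μ : Measure ℝ} [IsProbabilityMeasure μ] {t q : ℝ}
    (h : μ (Iic t) = ENNReal.ofReal q) (hq : 0 ≤ q) : μ (Ioi t) = ENNReal.ofReal (1 - q) := by
  rw [← compl_Iic, prob_compl_eq_one_sub measurableSet_Iic, h, ENNReal.ofReal_sub _ hq,
    ENNReal.ofReal_one]

lemma stdNormal2_fst_preimage (s : Set ℝ) : stdNormal2 (Prod.fst ⁻¹' s) = stdNormal s := by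
  rw [← prod_univ, stdNormal2, Measure.prod_prod, measure_univ, mul_one]

lemma stdNormal2_sub_Ztilde2_preimage {ω : ℝ} (hω : ω ∈ Icc (0 : ℝ) 1) {s : Set ℝ}
    (hs : MeasurableSet s) :
    stdNormal2 ((fun p => p.1 - Ztilde2 ω p) ⁻¹' s) = gaussianReal 0 (1 - ω).toNNReal s := by
  have hgap : (fun p : ℝ × ℝ => p.1 - Ztilde2 ω p) =
      fun p => (1 - ω) * p.1 + -√(ω - ω ^ 2) * p.2 := by
    ext p; simp only [Ztilde2]; ring
  have hvar : (1 - ω) ^ 2 + (-√(ω - ω ^ 2)) ^ 2 = 1 - ω := by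
    rw [neg_sq, Real.sq_sqrt (by nlinarith [hω.1, hω.2])]
    ring
  rw [← Measure.map_apply (by rw [hgap]; fun_prop) hs, hgap, map_stdNormal2_linear, hvar]

noncomputable def rejectionProb (z ω c : ℝ) : ℝ≥0∞ :=
  stdNormal2 {p : ℝ × ℝ | min z (Ztilde2 ω p + c) < p.1}

lemma setOf_min_Ztilde2_lt (z ω c : ℝ) :
    {p : ℝ × ℝ | min z (Ztilde2 ω p + c) < p.1} =
      Prod.fst ⁻¹' Ioi z ∪ (fun p => p.1 - Ztilde2 ω p) ⁻¹' Ioi c := by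
  ext p
  simp only [mem_ofPred_eq, min_lt_iff, mem_union, mem_preimage, mem_Ioi, lt_sub_iff_add_lt']

lemma isOpen_setOf_min_Ztilde2_lt (z ω c : ℝ) :
    IsOpen {p : ℝ × ℝ | min z (Ztilde2 ω p + c) < p.1} :=
  isOpen_lt (by unfold Ztilde2; fun_prop) continuous_fst

lemma rejectionProb_le {z ω c : ℝ} (hω : ω ∈ Icc (0 : ℝ) 1) (hc : 0 ≤ c) :
    rejectionProb z ω c ≤ stdNormal (Ioi z) + stdNormal (Ioi c) := by
  rw [rejectionProb, setOf_min_Ztilde2_lt]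
  refine (measure_union_le _ _).trans (add_le_add (stdNormal2_fst_preimage _).le ?_)
  rw [stdNormal2_sub_Ztilde2_preimage hω measurableSet_Ioi]
  exact gaussianReal_Ioi_le_of_le_one (Real.toNNReal_le_one.mpr (by linarith [hω.1])) hc

lemma inv_two_le_rejectionProb_zero (z : ℝ) {ω : ℝ} (hω : ω ∈ Ico (0 : ℝ) 1) :
    2⁻¹ ≤ rejectionProb z ω 0 := by
  rw [rejectionProb, setOf_min_Ztilde2_lt, ← gaussianReal_zero_Ioi_zero
    (Real.toNNReal_pos.mpr (sub_pos.mpr hω.2)).ne',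
    ← stdNormal2_sub_Ztilde2_preimage (Ico_subset_Icc_self hω) measurableSet_Ioi]
  exact measure_mono subset_union_right

lemma rejectionProb_omega_zero (z c : ℝ) : rejectionProb z 0 c = stdNormal (Ioi (min z c)) := by
  rw [rejectionProb, ← stdNormal2_fst_preimage]
  congr 1
  ext p
  simp [Ztilde2]

lemma continuousAt_rejectionProb (z : ℝ) {ω c : ℝ} (hω : ω ∈ Ico (0 : ℝ) 1) :
    ContinuousAt (fun q : ℝ × ℝ => rejectionProb z q.1 q.2) (ω, c) := by
  have hnull : stdNormal2 (Prod.fst ⁻¹' {z} ∪ (fun p => p.1 - Ztilde2 ω p) ⁻¹' {c}) = 0 := by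
    have := nullSingletonClass_gaussianReal (μ := 0) (Real.toNNReal_pos.mpr (sub_pos.mpr hω.2)).ne'
    refine measure_union_null ?_ ?_
    · rw [stdNormal2_fst_preimage, measure_singleton]
    · rw [stdNormal2_sub_Ztilde2_preimage (Ico_subset_Icc_self hω) (measurableSet_singleton c),
        measure_singleton]
  refine tendsto_measure_of_ae_tendsto_indicator_of_isFiniteMeasure _
    (isOpen_setOf_min_Ztilde2_lt z ω c).measurableSet
    (fun q => (isOpen_setOf_min_Ztilde2_lt z q.1 q.2).measurableSet) ?_
  filter_upwards [measure_eq_zero_iff_ae_notMem.mp hnull] with p hp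
  have hne : min z (Ztilde2 ω p + c) ≠ p.1 := by
    intro heq
    refine hp ?_
    rcases min_choice z (Ztilde2 ω p + c) with h | h <;> rw [h] at heq
    · exact Or.inl heq.symm
    · exact Or.inr (by simp only [mem_preimage, mem_singleton_iff]; linarith)
  have hcont : ContinuousAt (fun q : ℝ × ℝ => min z (Ztilde2 q.1 p + q.2)) (ω, c) := by
    unfold Ztilde2; fun_prop
  rcases hne.lt_or_gt with hlt | hgt
  · filter_upwards [hcont.eventually_lt continuousAt_const hlt] with q hq
    exact iff_of_true hq hlt
  · filter_upwards [continuousAt_const.eventually_lt hcont hgt] with q hq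
    exact iff_of_false hq.not_gt hgt.not_gt

lemma rejectionProb_strictAnti (z : ℝ) {ω : ℝ} (hω : ω ∈ Ioo (0 : ℝ) 1) :
    StrictAnti (rejectionProb z ω) := by
  intro c₁ c₂ hc
  let D : ℝ × ℝ → ℝ := fun p => p.1 - Ztilde2 ω p
  let E : ℝ → Set (ℝ × ℝ) := fun c => Prod.fst ⁻¹' Ioi z ∪ D ⁻¹' Ioi c
  let O : Set (ℝ × ℝ) := Prod.fst ⁻¹' Iio z ∩ D ⁻¹' Ioo c₁ c₂
  have hE : ∀ c, rejectionProb z ω c = stdNormal2 (E c) := fun c => by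
    rw [rejectionProb, setOf_min_Ztilde2_lt]
  have hsub : E c₂ ⊆ E c₁ := union_subset_union_right _ (preimage_mono (Ioi_subset_Ioi hc.le))
  have hO : O ⊆ E c₁ \ E c₂ := fun p ⟨(hz : p.1 < z), (hD : D p ∈ Ioo c₁ c₂)⟩ =>
    ⟨Or.inr hD.1, by
      rintro (h | h)
      exacts [(lt_asymm hz) h, (lt_asymm hD.2) h]⟩
  have hD : Continuous D := by unfold D Ztilde2; fun_prop
  have hOopen : IsOpen O := (isOpen_Iio.preimage continuous_fst).inter (isOpen_Ioo.preimage hD)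
  -- `D` has slope `-√(ω - ω²) ≠ 0` in the second coordinate, so it takes every value on a fibre.
  have hOne : O.Nonempty := by
    have hs : 0 < √(ω - ω ^ 2) := Real.sqrt_pos.mpr (by nlinarith [hω.1, hω.2])
    set m := (c₁ + c₂) / 2
    refine ⟨(z - 1, ((1 - ω) * (z - 1) - m) / √(ω - ω ^ 2)), sub_one_lt z, ?_⟩
    have hDm : D (z - 1, ((1 - ω) * (z - 1) - m) / √(ω - ω ^ 2)) = m := by
      simp only [D, Ztilde2]
      rw [mul_div_cancel₀ _ hs.ne']
      ring
    simp only [mem_preimage, hDm, mem_Ioo, m]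
    constructor <;> linarith
  have hpos : 0 < stdNormal2 (E c₁ \ E c₂) :=
    (hOopen.measure_pos _ hOne).trans_le (measure_mono hO)
  calc rejectionProb z ω c₂ < stdNormal2 (E c₂) + stdNormal2 (E c₁ \ E c₂) := by
        rw [hE]; exact ENNReal.lt_add_right (measure_ne_top _ _) hpos.ne'
    _ = rejectionProb z ω c₁ := by
        rw [measure_add_sdiff ((measurable_fst measurableSet_Ioi).union
          (hD.measurable measurableSet_Ioi)).nullMeasurableSet, union_eq_right.mpr hsub, hE]

lemma continuous_rejectionProb (z : ℝ) {ω : ℝ} (hω : ω ∈ Ico (0 : ℝ) 1) :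
    Continuous (rejectionProb z ω) :=
  continuous_iff_continuousAt.mpr fun _ =>
    (continuousAt_rejectionProb z hω).comp (Continuous.prodMk_right ω).continuousAt

lemma exists_rejectionProb_eq {z ω c₀ : ℝ} {a : ℝ≥0∞} (hω : ω ∈ Ico (0 : ℝ) 1) (hc₀ : 0 ≤ c₀)
    (hle : stdNormal (Ioi z) + stdNormal (Ioi c₀) ≤ a) (ha : a ≤ 2⁻¹) :
    ∃ c ∈ Icc 0 c₀, rejectionProb z ω c = a :=
  intermediate_value_Icc' hc₀ (continuous_rejectionProb z hω).continuousOn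
    ⟨(rejectionProb_le (Ico_subset_Icc_self hω) hc₀).trans hle,
      ha.trans (inv_two_le_rejectionProb_zero z hω)⟩

lemma eq_of_rejectionProb_omega_zero_eq {z t c : ℝ} (ht : t < z)
    (h : rejectionProb z 0 c = stdNormal (Ioi t)) : c = t := by
  rw [rejectionProb_omega_zero] at h
  have hmin := (measure_Ioi_strictAnti stdNormal).injective h
  rcases min_choice z c with h' | h' <;> rw [h'] at hmin
  exacts [absurd hmin ht.ne', hmin]

lemma rejectionProb_inj {z t ω c c' : ℝ} (hω : ω ∈ Ico (0 : ℝ) 1) (ht : t < z)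
    (hc : rejectionProb z ω c = stdNormal (Ioi t))
    (hc' : rejectionProb z ω c' = stdNormal (Ioi t)) : c = c' := by
  rcases hω.1.eq_or_lt with rfl | hω0
  · rw [eq_of_rejectionProb_omega_zero_eq ht hc, eq_of_rejectionProb_omega_zero_eq ht hc']
  · exact (rejectionProb_strictAnti z ⟨hω0, hω.2⟩).injective (hc.trans hc'.symm)

lemma continuousOn_of_unique_root {X Y Z : Type*} [TopologicalSpace X] [TopologicalSpace Y]
    [TopologicalSpace Z] [T1Space Z] {F : X × Y → Z} {S : Set X} {K : Set Y} {g : X → Y} {z : Z}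
    (hK : IsCompact K) (hF : ∀ x ∈ S, ∀ y ∈ K, ContinuousAt F (x, y))
    (hgK : ∀ x ∈ S, g x ∈ K) (hg : ∀ x ∈ S, F (x, g x) = z)
    (huniq : ∀ x ∈ S, ∀ y ∈ K, F (x, y) = z → y = g x) : ContinuousOn g S := by
  intro x₀ hx₀
  refine hK.tendsto_nhds_of_unique_mapClusterPt (eventually_nhdsWithin_of_forall hgK)
    fun y hy hcluster => huniq x₀ hx₀ y hy ?_
  by_contra hne
  obtain ⟨U, hU, V, hV, hUV⟩ := mem_nhds_prod_iff.mp ((hF x₀ hx₀ y hy).eventually_ne hne)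
  have hnear : ∀ᶠ x in 𝓝[S] x₀, x ∈ S ∧ x ∈ U :=
    (eventually_mem_nhdsWithin (s := S)).and (mem_nhdsWithin_of_mem_nhds hU)
  obtain ⟨x, hxV, hxS, hxU⟩ := ((hcluster.frequently hV).and_eventually hnear).exists
  exact hUV (mk_mem_prod hxU hxV) (hg x hxS)

/-- existence of the continuous critical-value function `c : [0,1) → [0, z_{1-γ}]`
with `P(Z₁ > min{z_{1-α+γ}, Z̃₂ + c(ω)}) = α` and `c 0 = z_{1-α}`. -/
theorem stmt0 (α γ : ℝ) (hα : α ∈ Set.Ioo (0 : ℝ) (1 / 2)) (hγ : γ ∈ Set.Ioo 0 α)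
    (zαγ zγ zα : ℝ)
    (hzαγ : stdNormal (Set.Iic zαγ) = ENNReal.ofReal (1 - α + γ))
    (hzγ : stdNormal (Set.Iic zγ) = ENNReal.ofReal (1 - γ))
    (hzα : stdNormal (Set.Iic zα) = ENNReal.ofReal (1 - α)) :
    ∃ c : ℝ → ℝ,
      (∀ ω ∈ Set.Ico (0 : ℝ) 1, c ω ∈ Set.Icc 0 zγ) ∧
      (∀ ω ∈ Set.Ico (0 : ℝ) 1,
        stdNormal2 {p : ℝ × ℝ | min zαγ (Ztilde2 ω p + c ω) < p.1} = ENNReal.ofReal α) ∧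
      ContinuousOn c (Set.Ico 0 1) ∧
      c 0 = zα := by
  obtain ⟨hα0, hα2⟩ := hα
  obtain ⟨hγ0, hγα⟩ := hγ
  have hαγ' : stdNormal (Ioi zαγ) = ENNReal.ofReal (α - γ) := by
    rw [prob_Ioi_eq_ofReal_one_sub hzαγ (by linarith)]; congr 1; ring
  have hγ' : stdNormal (Ioi zγ) = ENNReal.ofReal γ := by
    rw [prob_Ioi_eq_ofReal_one_sub hzγ (by linarith)]; congr 1; ring
  have hα' : stdNormal (Ioi zα) = ENNReal.ofReal α := by
    rw [prob_Ioi_eq_ofReal_one_sub hzα (by linarith)]; congr 1; ring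
  have hhalf : ∀ q < (1 / 2 : ℝ), ENNReal.ofReal q ≤ 2⁻¹ := fun q hq =>
    (ENNReal.ofReal_le_ofReal hq.le).trans_eq <| by
      rw [one_div, ENNReal.ofReal_inv_of_pos two_pos, ENNReal.ofReal_ofNat]
  have hIoi0 : stdNormal (Ioi 0) = 2⁻¹ := gaussianReal_zero_Ioi_zero one_ne_zero
  have hzγ0 : 0 ≤ zγ := (measure_Ioi_strictAnti stdNormal).le_iff_ge.mp <| by
    rw [hγ', hIoi0]; exact hhalf γ (by linarith)
  have hzα_lt : zα < zαγ := (measure_Ioi_strictAnti stdNormal).lt_iff_gt.mp <| by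
    rw [hαγ', hα']; exact (ENNReal.ofReal_lt_ofReal_iff hα0).mpr (by linarith)
  have hex : ∀ ω ∈ Ico (0 : ℝ) 1, ∃ c ∈ Icc 0 zγ, rejectionProb zαγ ω c = ENNReal.ofReal α :=
    fun ω hω => exists_rejectionProb_eq hω hzγ0
      (by rw [hαγ', hγ', ← ENNReal.ofReal_add (by linarith) hγ0.le, sub_add_cancel]) (hhalf α hα2)
  choose! c hcK hcα using hex
  refine ⟨c, hcK, hcα, ?_, eq_of_rejectionProb_omega_zero_eq hzα_lt
    ((hcα 0 ⟨le_rfl, one_pos⟩).trans hα'.symm)⟩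
  exact continuousOn_of_unique_root (F := fun q => rejectionProb zαγ q.1 q.2) isCompact_Icc
    (fun ω hω _ _ => continuousAt_rejectionProb zαγ hω) hcK hcα
    fun ω hω _ _ h => rejectionProb_inj hω hzα_lt (h.trans hα'.symm) ((hcα ω hω).trans hα'.symm)
end

section
/- Fix α ∈ (0,1/2), γ ∈ (0,α) and ω ∈ (0,1). The function g(c) = P(Z1 > min{z_{1−α+γ}, Z̃2 + c}) is strictly decreasing in c on the interval [0, z_{1−γ}]. -/
open MeasureTheory ProbabilityTheory Real

/-!
Raising `c` shrinks the event `{min b (Y + c) < Z}`, and the shrinkage from `c₁` to `c₂`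
contains the open set `{Y + c₁ < Z < min b (Y + c₂)}`. For `0 < ω < 1` the map
`p ↦ (Z₁ p, Z̃₂ p)` is a linear bijection of `ℝ²`, so this open set is nonempty, and the
Gaussian product measure charges every nonempty open set.
-/

lemma measureReal_lt_measureReal_of_isOpen_subset_diff {X : Type*} [TopologicalSpace X]
    [MeasurableSpace X] [OpensMeasurableSpace X] (μ : Measure X) [IsFiniteMeasure μ]
    [μ.IsOpenPosMeasure] {s t U : Set X} (hst : s ⊆ t) (hU : IsOpen U) (hUne : U.Nonempty)
    (hUt : U ⊆ t \ s) : μ.real s < μ.real t :=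
  calc μ.real s < μ.real s + μ.real U :=
        lt_add_of_pos_right _ (ENNReal.toReal_pos (hU.measure_ne_zero μ hUne) (measure_ne_top μ U))
    _ = μ.real (s ∪ U) :=
        (measureReal_union (Set.disjoint_left.2 fun _ hs hU ↦ (hUt hU).2 hs)
          hU.measurableSet).symm
    _ ≤ μ.real t := measureReal_mono (Set.union_subset hst fun _ h ↦ (hUt h).1)

lemma strictAnti_measureReal_setOf_min_add_lt {X : Type*} [TopologicalSpace X]
    [MeasurableSpace X] [OpensMeasurableSpace X] (μ : Measure X) [IsFiniteMeasure μ]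
    [μ.IsOpenPosMeasure] {Y Z : X → ℝ} (hY : Continuous Y) (hZ : Continuous Z)
    (hYZ : Function.Surjective fun x ↦ (Y x, Z x)) (b : ℝ) :
    StrictAnti fun c ↦ μ.real {x | min b (Y x + c) < Z x} := by
  intro c₁ c₂ hc
  set U := {x | Y x + c₁ < Z x} ∩ {x | Z x < Y x + c₂} ∩ {x | Z x < b}
  have hU : IsOpen U :=
    ((isOpen_lt (hY.add continuous_const) hZ).inter
      (isOpen_lt hZ (hY.add continuous_const))).inter (isOpen_lt hZ continuous_const)
  have hUne : U.Nonempty := by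
    obtain ⟨x₀, hx₀⟩ := hYZ (b - 1 - (c₁ + c₂) / 2, b - 1)
    obtain ⟨hY₀, hZ₀⟩ := Prod.mk.inj hx₀
    exact ⟨x₀, ⟨⟨show Y x₀ + c₁ < Z x₀ by linarith, show Z x₀ < Y x₀ + c₂ by linarith⟩,
      show Z x₀ < b by linarith⟩⟩
  refine measureReal_lt_measureReal_of_isOpen_subset_diff μ ?_ hU hUne ?_
  · exact fun x hx ↦ (min_le_min_left b (by linarith)).trans_lt hx
  · rintro x ⟨⟨h₁, h₂⟩, h₃⟩
    exact ⟨Set.mem_ofPred.2 ((min_le_right _ _).trans_lt h₁),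
      fun h : min b (Y x + c₂) < Z x ↦ (le_min h₃.le h₂.le).not_gt h⟩

lemma isOpenPosMeasure_gaussianReal (m : ℝ) {v : NNReal} (hv : v ≠ 0) :
    (gaussianReal m v).IsOpenPosMeasure :=
  ⟨fun _ hU hne h0 ↦ hU.measure_ne_zero volume hne (gaussianReal_absolutelyContinuous' m hv h0)⟩

instance inst_s1 : IsProbabilityMeasure stdNormal := by unfold stdNormal; infer_instance

instance inst_s1_2 : stdNormal.IsOpenPosMeasure := isOpenPosMeasure_gaussianReal 0 one_ne_zero

instance inst_s1_3 : IsProbabilityMeasure stdNormal2 := by unfold stdNormal2; infer_instance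

instance inst_s1_4 : stdNormal2.IsOpenPosMeasure := by unfold stdNormal2; infer_instance

lemma continuous_Ztilde2 (ω : ℝ) : Continuous (Ztilde2 ω) := by
  unfold Ztilde2; fun_prop

lemma surjective_Ztilde2_fst {ω : ℝ} (hω : ω ∈ Set.Ioo (0 : ℝ) 1) :
    Function.Surjective fun p : ℝ × ℝ ↦ (Ztilde2 ω p, p.1) := by
  have hs : Real.sqrt (ω - ω ^ 2) ≠ 0 := (Real.sqrt_pos.2 (by nlinarith [hω.1, hω.2])).ne'
  rintro ⟨y, z⟩
  refine ⟨(z, (y - ω * z) / Real.sqrt (ω - ω ^ 2)), ?_⟩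
  simp only [Ztilde2, mul_div_cancel₀ _ hs]
  ring_nf

theorem stmt1_general (ω : ℝ)
    (hω : ω ∈ Set.Ioo (0 : ℝ) 1)
    (zαγ zγ : ℝ) :
    StrictAntiOn
      (fun c : ℝ => (stdNormal2 {p : ℝ × ℝ | min zαγ (Ztilde2 ω p + c) < p.1}).toReal)
      (Set.Icc 0 zγ) :=
  (strictAnti_measureReal_setOf_min_add_lt stdNormal2 (continuous_Ztilde2 ω) continuous_fst
    (surjective_Ztilde2_fst hω) zαγ).strictAntiOn _

/-- `c ↦ P(Z₁ > min{z_{1-α+γ}, Z̃₂ + c})` is strictly decreasing on `[0, z_{1-γ}]`. -/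
theorem stmt1 (α γ ω : ℝ) (hα : α ∈ Set.Ioo (0 : ℝ) (1 / 2)) (hγ : γ ∈ Set.Ioo 0 α)
    (hω : ω ∈ Set.Ioo (0 : ℝ) 1)
    (zαγ zγ : ℝ)
    (hzαγ : stdNormal (Set.Iic zαγ) = ENNReal.ofReal (1 - α + γ))
    (hzγ : stdNormal (Set.Iic zγ) = ENNReal.ofReal (1 - γ)) :
    StrictAntiOn
      (fun c : ℝ => (stdNormal2 {p : ℝ × ℝ | min zαγ (Ztilde2 ω p + c) < p.1}).toReal)
      (Set.Icc 0 zγ) :=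
  stmt1_general ω hω zαγ zγ
end

section
/- Fix α ∈ (0,1), γ ∈ (0,α) and ρ ∈ (0,1). Let (Z1, Z2) be a centered bivariate Gaussian vector with unit variances and correlation ρ, and suppose c ∈ ℝ satisfies P(Z1 > min{z_{1−α+γ}, ρZ2 + c}) = α. Then for every β ∈ ℝ and every δ ≥ 0, the bivariate Gaussian vector (Yβ, Yδ) with mean (β, δ), unit variances and correlation ρ satisfies P(β ≥ Yβ − min{z_{1−α+γ}, ρYδ + c}) ≥ 1−α. -/
open MeasureTheory ProbabilityTheory Real

/-- `(Z₁, Z₂)` with `Z₁ p = p.1`, `Z₂ p = ρ * p.1 + √(1 - ρ²) * p.2` is, under `stdNormal2`, a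
centered bivariate Gaussian vector with unit variances and correlation `ρ`. -/
noncomputable def Z2of (ρ : ℝ) (p : ℝ × ℝ) : ℝ := ρ * p.1 + Real.sqrt (1 - ρ ^ 2) * p.2

/-- `Yβ p = β + p.1`: under `stdNormal2`, a Gaussian with mean `β` and unit variance. -/
noncomputable def Ybeta (β : ℝ) (p : ℝ × ℝ) : ℝ := β + p.1

/-- `Yδ p = δ + ρ * p.1 + √(1 - ρ²) * p.2`: under `stdNormal2`, a Gaussian with mean `δ`,
unit variance and correlation `ρ` with `Yβ`. -/
noncomputable def Ydelta (δ ρ : ℝ) (p : ℝ × ℝ) : ℝ := δ + ρ * p.1 + Real.sqrt (1 - ρ ^ 2) * p.2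

/-- if `c` satisfies `P(Z₁ > min{z_{1-α+γ}, ρ Z₂ + c}) = α`, then the interval
`[Yβ - min{z_{1-α+γ}, ρ Yδ + c}, ∞)` covers `β` with probability at least `1 - α` for every
`β ∈ ℝ` and `δ ≥ 0`. -/
theorem stmt4 (α γ ρ : ℝ) (hα : α ∈ Set.Ioo (0 : ℝ) 1) (hγ : γ ∈ Set.Ioo 0 α)
    (hρ : ρ ∈ Set.Ioo (0 : ℝ) 1)
    (zαγ c : ℝ)
    (hzαγ : stdNormal (Set.Iic zαγ) = ENNReal.ofReal (1 - α + γ))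
    (hc : stdNormal2 {p : ℝ × ℝ | min zαγ (ρ * Z2of ρ p + c) < p.1} = ENNReal.ofReal α)
    (β δ : ℝ) (hδ : 0 ≤ δ) :
    ENNReal.ofReal (1 - α) ≤
      stdNormal2 {p : ℝ × ℝ | Ybeta β p - min zαγ (ρ * Ydelta δ ρ p + c) ≤ β} := by
  have hprob : IsProbabilityMeasure stdNormal2 := by
    unfold stdNormal2 stdNormal; infer_instance
  set S : Set (ℝ × ℝ) := {p : ℝ × ℝ | min zαγ (ρ * Z2of ρ p + c) < p.1} with hS
  have hSm : MeasurableSet S := by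
    apply measurableSet_lt
    · have : Measurable fun p : ℝ × ℝ => Z2of ρ p := by
        unfold Z2of
        exact (measurable_fst.const_mul ρ).add (measurable_snd.const_mul _)
      exact measurable_const.min ((this.const_mul ρ).add measurable_const)
    · exact measurable_fst
  have hsub : Sᶜ ⊆ {p : ℝ × ℝ | Ybeta β p - min zαγ (ρ * Ydelta δ ρ p + c) ≤ β} := by
    intro p hp
    simp only [Set.mem_compl_iff, hS, Set.mem_setOf_eq, not_lt] at hp
    simp only [Set.mem_setOf_eq, Ybeta, Ydelta, Z2of] at *
    have h1 : ρ * (ρ * p.1 + Real.sqrt (1 - ρ ^ 2) * p.2) + c ≤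
        ρ * (δ + ρ * p.1 + Real.sqrt (1 - ρ ^ 2) * p.2) + c := by
      nlinarith [hρ.1]
    have := le_trans hp (min_le_min le_rfl h1)
    linarith [this]
  calc ENNReal.ofReal (1 - α) = 1 - ENNReal.ofReal α := by
        rw [← ENNReal.ofReal_one, ← ENNReal.ofReal_sub 1 (le_of_lt hα.1)]
    _ = stdNormal2 Sᶜ := by
        rw [measure_compl hSm (measure_ne_top _ _), hc, measure_univ]
    _ ≤ _ := measure_mono hsub
end

section
/- Let Ω be a positive definite (1+k)×(1+k) matrix partitioned conformably with (β, δ^{(s)}, δ^{(−s)}) as [[1, Ω_{βδ^{(s)}}, Ω_{βδ^{(−s)}}], [Ω_{δ^{(s)}β}, Ω_{δ^{(s)}δ^{(s)}}, Ω_{δ^{(s)}δ^{(−s)}}], [Ω_{δ^{(−s)}β}, Ω_{δ^{(−s)}δ^{(s)}}, Ω_{δ^{(−s)}δ^{(−s)}}]], and let Ω^{−1} be partitioned the same way with blocks denoted by superscripts. Then Ω^{βδ^{(s)}} − Ω^{βδ^{(−s)}}(Ω^{δ^{(−s)}δ^{(−s)}})^{−1}Ω^{δ^{(−s)}δ^{(s)}}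 = −(Ω^{ββ} − Ω^{βδ^{(−s)}}(Ω^{δ^{(−s)}δ^{(−s)}})^{−1}Ω^{δ^{(−s)}β}) · Ω_{βδ^{(s)}}Ω_{δ^{(s)}δ^{(s)}}^{−1}. -/
/-!
Write `P = (β, δ⁽ˢ⁾)`. The Schur complement of `Θ^{δ⁽⁻ˢ⁾δ⁽⁻ˢ⁾}` in `Θ = Ω⁻¹` is `(Ω_{PP})⁻¹`:
the `P`-rows of `Ω Θ = 1` give `Ω_{PP} · (Θ^{PP} - Θ^{Pδ⁽⁻ˢ⁾} (Θ^{δ⁽⁻ˢ⁾δ⁽⁻ˢ⁾})⁻¹ Θ^{δ⁽⁻ˢ⁾P}) = 1`.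
The left side of the identity is the `(β, δ⁽ˢ⁾)` block of this Schur complement `S` and the bracket
on the right is its `(β, β)` block, so the claim is the `(β, δ⁽ˢ⁾)` block of `S Ω_{PP} = 1`.
-/

open Matrix

namespace Matrix

variable {n p α : Type*} [Fintype n] [Fintype p]

section Semiring

variable [Semiring α]

theorem toBlocks₁₁_mul (X Y : Matrix (n ⊕ p) (n ⊕ p) α) :
    (X * Y).toBlocks₁₁ = X.toBlocks₁₁ * Y.toBlocks₁₁ + X.toBlocks₁₂ * Y.toBlocks₂₁ := by
  conv_lhs => rw [← fromBlocks_toBlocks X, ← fromBlocks_toBlocks Y, fromBlocks_multiply]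
  rfl

theorem toBlocks₁₂_mul (X Y : Matrix (n ⊕ p) (n ⊕ p) α) :
    (X * Y).toBlocks₁₂ = X.toBlocks₁₁ * Y.toBlocks₁₂ + X.toBlocks₁₂ * Y.toBlocks₂₂ := by
  conv_lhs => rw [← fromBlocks_toBlocks X, ← fromBlocks_toBlocks Y, fromBlocks_multiply]
  rfl

end Semiring

variable [DecidableEq n] [DecidableEq p] [CommRing α] {X Y : Matrix (n ⊕ p) (n ⊕ p) α}

theorem toBlocks₁₂_eq_neg_of_mul_eq_one (h : X * Y = 1) (hY : IsUnit Y.toBlocks₂₂.det) :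
    X.toBlocks₁₂ = -(X.toBlocks₁₁ * Y.toBlocks₁₂ * Y.toBlocks₂₂⁻¹) := by
  have h₁₂ : X.toBlocks₁₁ * Y.toBlocks₁₂ + X.toBlocks₁₂ * Y.toBlocks₂₂ = 0 := by
    rw [← toBlocks₁₂_mul, h, ← fromBlocks_one, toBlocks_fromBlocks₁₂]
  rw [← mul_nonsing_inv_cancel_right _ X.toBlocks₁₂ hY, eq_neg_of_add_eq_zero_right h₁₂,
    Matrix.neg_mul]

theorem toBlocks₁₁_mul_schur_eq_one (h : X * Y = 1) (hY : IsUnit Y.toBlocks₂₂.det) :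
    X.toBlocks₁₁ * (Y.toBlocks₁₁ - Y.toBlocks₁₂ * Y.toBlocks₂₂⁻¹ * Y.toBlocks₂₁) = 1 := by
  have h₁₁ : X.toBlocks₁₁ * Y.toBlocks₁₁ + X.toBlocks₁₂ * Y.toBlocks₂₁ = 1 := by
    rw [← toBlocks₁₁_mul, h, ← fromBlocks_one, toBlocks_fromBlocks₁₁]
  rw [toBlocks₁₂_eq_neg_of_mul_eq_one h hY] at h₁₁
  rw [Matrix.mul_sub, ← h₁₁, Matrix.neg_mul, ← sub_eq_add_neg]
  simp only [Matrix.mul_assoc]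

end Matrix

theorem stmt8_general (m l : Type*) [Fintype m] [Fintype l] [DecidableEq m] [DecidableEq l]
    (Ω : Matrix (Unit ⊕ m ⊕ l) (Unit ⊕ m ⊕ l) ℝ) (hpd : Ω.PosDef)
    (Θ : Matrix (Unit ⊕ m ⊕ l) (Unit ⊕ m ⊕ l) ℝ) (hΘ : Θ = Ω⁻¹) :
    Θ.submatrix (Sum.inl : Unit → Unit ⊕ m ⊕ l) (Sum.inr ∘ Sum.inl) -
        Θ.submatrix (Sum.inl : Unit → Unit ⊕ m ⊕ l) (Sum.inr ∘ Sum.inr) *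
          (Θ.submatrix (Sum.inr ∘ Sum.inr : l → Unit ⊕ m ⊕ l) (Sum.inr ∘ Sum.inr))⁻¹ *
          Θ.submatrix (Sum.inr ∘ Sum.inr : l → Unit ⊕ m ⊕ l) (Sum.inr ∘ Sum.inl) =
      -((Θ.submatrix (Sum.inl : Unit → Unit ⊕ m ⊕ l) Sum.inl -
          Θ.submatrix (Sum.inl : Unit → Unit ⊕ m ⊕ l) (Sum.inr ∘ Sum.inr) *
            (Θ.submatrix (Sum.inr ∘ Sum.inr : l → Unit ⊕ m ⊕ l) (Sum.inr ∘ Sum.inr))⁻¹ *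
            Θ.submatrix (Sum.inr ∘ Sum.inr : l → Unit ⊕ m ⊕ l) Sum.inl) *
        (Ω.submatrix (Sum.inl : Unit → Unit ⊕ m ⊕ l) (Sum.inr ∘ Sum.inl) *
          (Ω.submatrix (Sum.inr ∘ Sum.inl : m → Unit ⊕ m ⊕ l) (Sum.inr ∘ Sum.inl))⁻¹)) := by
  -- Along `e` the first diagonal block is indexed by `P` and the second by `δ⁽⁻ˢ⁾`; every block
  -- of `Ω.submatrix e e` and `Θ.submatrix e e` below is definitionally a submatrix of the goal.
  set e : (Unit ⊕ m) ⊕ l ≃ Unit ⊕ m ⊕ l := Equiv.sumAssoc Unit m l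
  have hΩΘ : Ω.submatrix e e * Θ.submatrix e e = 1 := by
    rw [submatrix_mul_equiv, hΘ, mul_nonsing_inv _ hpd.det_pos.ne'.isUnit, submatrix_one_equiv]
  have hΘ₂₂ : IsUnit (Θ.submatrix e e).toBlocks₂₂.det :=
    ((hΘ ▸ hpd.inv).submatrix (e.injective.comp Sum.inr_injective)).det_pos.ne'.isUnit
  have hΩ₂₂ : IsUnit (Ω.submatrix e e).toBlocks₁₁.toBlocks₂₂.det :=
    (hpd.submatrix ((e.injective.comp Sum.inl_injective).comp Sum.inr_injective)).det_pos.ne'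
      |>.isUnit
  have hSchur := mul_eq_one_comm.mp (toBlocks₁₁_mul_schur_eq_one hΩΘ hΘ₂₂)
  rw [← Matrix.mul_assoc]
  exact toBlocks₁₂_eq_neg_of_mul_eq_one hSchur hΩ₂₂

/-- for a positive definite `(1+k)×(1+k)` matrix `Ω` partitioned conformably with
`(β, δ⁽ˢ⁾, δ⁽⁻ˢ⁾)` (index type `Unit ⊕ m ⊕ l`, with `Ω_ββ = 1`), and `Θ = Ω⁻¹` partitioned the
same way,
`Θ^{βδ⁽ˢ⁾} - Θ^{βδ⁽⁻ˢ⁾} (Θ^{δ⁽⁻ˢ⁾δ⁽⁻ˢ⁾})⁻¹ Θ^{δ⁽⁻ˢ⁾δ⁽ˢ⁾}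
  = -(Θ^{ββ} - Θ^{βδ⁽⁻ˢ⁾} (Θ^{δ⁽⁻ˢ⁾δ⁽⁻ˢ⁾})⁻¹ Θ^{δ⁽⁻ˢ⁾β}) · Ω_{βδ⁽ˢ⁾} Ω_{δ⁽ˢ⁾δ⁽ˢ⁾}⁻¹`. -/
theorem stmt8 (m l : Type*) [Fintype m] [Fintype l] [DecidableEq m] [DecidableEq l]
    (Ω : Matrix (Unit ⊕ m ⊕ l) (Unit ⊕ m ⊕ l) ℝ) (hpd : Ω.PosDef)
    (h11 : Ω (Sum.inl ()) (Sum.inl ()) = 1)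
    (Θ : Matrix (Unit ⊕ m ⊕ l) (Unit ⊕ m ⊕ l) ℝ) (hΘ : Θ = Ω⁻¹) :
    Θ.submatrix (Sum.inl : Unit → Unit ⊕ m ⊕ l) (Sum.inr ∘ Sum.inl) -
        Θ.submatrix (Sum.inl : Unit → Unit ⊕ m ⊕ l) (Sum.inr ∘ Sum.inr) *
          (Θ.submatrix (Sum.inr ∘ Sum.inr : l → Unit ⊕ m ⊕ l) (Sum.inr ∘ Sum.inr))⁻¹ *
          Θ.submatrix (Sum.inr ∘ Sum.inr : l → Unit ⊕ m ⊕ l) (Sum.inr ∘ Sum.inl) =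
      -((Θ.submatrix (Sum.inl : Unit → Unit ⊕ m ⊕ l) Sum.inl -
          Θ.submatrix (Sum.inl : Unit → Unit ⊕ m ⊕ l) (Sum.inr ∘ Sum.inr) *
            (Θ.submatrix (Sum.inr ∘ Sum.inr : l → Unit ⊕ m ⊕ l) (Sum.inr ∘ Sum.inr))⁻¹ *
            Θ.submatrix (Sum.inr ∘ Sum.inr : l → Unit ⊕ m ⊕ l) Sum.inl) *
        (Ω.submatrix (Sum.inl : Unit → Unit ⊕ m ⊕ l) (Sum.inr ∘ Sum.inl) *
          (Ω.submatrix (Sum.inr ∘ Sum.inl : m → Unit ⊕ m ⊕ l) (Sum.inr ∘ Sum.inl))⁻¹)) :=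
  stmt8_general m l Ω hpd Θ hΘ
end

section
/- Let Y = (Yβ, Yδ′)′ ∼ N((β, δ′)′, Ω) with Ω a positive definite (k+1)×(k+1) correlation matrix. Then Yβ − Ω_{βδ}Ω_{δδ}^{−1}Yδ is Gaussian with mean β − Ω_{βδ}Ω_{δδ}^{−1}δ and variance 1 − Ω_{βδ}Ω_{δδ}^{−1}Ω_{δβ}. Consequently, for α ∈ (0,1), if every entry of the row vector Ω_{βδ}Ω_{δδ}^{−1} is non-negative and δ ≥ 0 componentwise, then P(β ≥ Yβ − Ω_{βδ}Ω_{δδ}^{−1}Yδ − z_{1−α}√(1 − Ω_{βδ}Ω_{δδ}^{−1}Ω_{δβ})) ≥ 1−α, with equality when δ = 0. -/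
open MeasureTheory ProbabilityTheory Real Matrix

/-- The law of `Y = (Yβ, Yδ')' ~ N((β, δ')', Ω)`, realized as the image of a vector of `k + 1`
independent standard normals under the affine map `x ↦ mean + R x`, where `R Rᵀ = Ω`. -/
noncomputable def gaussLaw {k : ℕ} (R : Matrix (Fin (k + 1)) (Fin (k + 1)) ℝ)
    (β : ℝ) (δ : Fin k → ℝ) : Measure (Fin (k + 1) → ℝ) :=
  Measure.map (fun x (i : Fin (k + 1)) => Fin.cases β δ i + ∑ j, R i j * x j)
    (Measure.pi fun _ : Fin (k + 1) => stdNormal)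

/-- The coefficient vector `Ω_{δδ}⁻¹ Ω_{δβ}`; by symmetry of `Ω` its entries are those of the
row vector `Ω_{βδ} Ω_{δδ}⁻¹`.  Index `0` corresponds to `β` and index `j.succ` to `δ_j`. -/
noncomputable def coefFull {k : ℕ} (Ω : Matrix (Fin (k + 1)) (Fin (k + 1)) ℝ) :
    Fin k → ℝ :=
  (Matrix.of fun i j : Fin k => Ω i.succ j.succ)⁻¹.mulVec fun j : Fin k => Ω j.succ 0

/-- `Ω_{βδ} Ω_{δδ}⁻¹ Ω_{δβ}`. -/
noncomputable def omegaFull {k : ℕ} (Ω : Matrix (Fin (k + 1)) (Fin (k + 1)) ℝ) : ℝ :=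
  ∑ j : Fin k, coefFull Ω j * Ω 0 j.succ

/-!
Writing `c = Ω_{δδ}⁻¹ Ω_{δβ}` and `v = (1, -c)`, the statistic `Yβ - c ⬝ Yδ` is the linear
functional `v ⬝ Y` of `Y = (β, δ) + R X` with `X` standard normal, hence Gaussian with mean
`v ⬝ (β, δ)` and variance `v ⬝ Ω v`. The normal equations `Ω_{δδ} c = Ω_{δβ}` say that `Ω v`
vanishes off the `β` coordinate, so `v ⬝ Ω v = Ω_{ββ} - Ω_{βδ} c` is the Schur complement,
positive because `Ω` is positive definite. The coverage event is `{v ⬝ Y ≤ β + z √σ²}`, and the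
mean `β - c ⬝ δ` is at most `β` when `c, δ ≥ 0`; so the coverage probability is at least
`P(Z ≤ z) = 1 - α`, with equality when `δ = 0`.
-/

open scoped NNReal

namespace ProbabilityTheory

lemma map_dotProduct_pi_gaussianReal {ι : Type*} [Fintype ι] (a : ι → ℝ) :
    (Measure.pi fun _ : ι => gaussianReal 0 1).map (a ⬝ᵥ ·) =
      gaussianReal 0 (a ⬝ᵥ a).toNNReal := by
  set L := innerSL ℝ (WithLp.toLp 2 a : EuclideanSpace ℝ ι)
  have hL : (a ⬝ᵥ ·) = L ∘ WithLp.toLp 2 := by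
    ext x
    simp [L, EuclideanSpace.inner_toLp_toLp, dotProduct_comm]
  rw [hL, ← Measure.map_map (by fun_prop) (by fun_prop), map_pi_eq_stdGaussian,
    IsGaussian.map_eq_gaussianReal, integral_strongDual_stdGaussian, variance_dual_stdGaussian,
    innerSL_apply_norm, ← real_inner_self_eq_norm_sq, EuclideanSpace.inner_toLp_toLp, star_trivial]

lemma map_const_add_dotProduct_pi_gaussianReal {ι : Type*} [Fintype ι] (m : ℝ) (a : ι → ℝ) :
    (Measure.pi fun _ : ι => gaussianReal 0 1).map (fun x => m + a ⬝ᵥ x) =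
      gaussianReal m (a ⬝ᵥ a).toNNReal := by
  rw [show (fun x => m + a ⬝ᵥ x) = (m + ·) ∘ (a ⬝ᵥ ·) from rfl,
    ← Measure.map_map (by fun_prop) (by fun_prop), map_dotProduct_pi_gaussianReal,
    gaussianReal_map_const_add, zero_add]

lemma gaussianReal_Iic_add_sqrt_mul (m z : ℝ) {v : ℝ≥0} (hv : v ≠ 0) :
    gaussianReal m v (Set.Iic (m + √v * z)) = gaussianReal 0 1 (Set.Iic z) := by
  have hσ : 0 < √(v : ℝ) := Real.sqrt_pos.2 (by positivity)
  have hstd : (gaussianReal 0 1).map (fun x => m + √v * x) = gaussianReal m v := by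
    rw [show (fun x : ℝ => m + √v * x) = (m + ·) ∘ (√v * ·) from rfl,
      ← Measure.map_map (by fun_prop) (by fun_prop), gaussianReal_map_const_mul,
      gaussianReal_map_const_add]
    congr
    · simp
    · ext; simp [Real.sq_sqrt v.coe_nonneg]
  rw [← hstd, Measure.map_apply (by fun_prop) measurableSet_Iic]
  congr 1
  ext x
  simp [hσ]

end ProbabilityTheory

lemma map_dotProduct_gaussLaw {k : ℕ} (R : Matrix (Fin (k + 1)) (Fin (k + 1)) ℝ) (β : ℝ)
    (δ : Fin k → ℝ) (v : Fin (k + 1) → ℝ) :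
    (gaussLaw R β δ).map (v ⬝ᵥ ·) =
      gaussianReal (v ⬝ᵥ Fin.cons β δ) (v ⬝ᵥ (R * Rᵀ) *ᵥ v).toNNReal := by
  have hcomp : (v ⬝ᵥ ·) ∘ (fun x (i : Fin (k + 1)) => Fin.cases β δ i + ∑ j, R i j * x j) =
      fun x => v ⬝ᵥ Fin.cons β δ + (v ᵥ* R) ⬝ᵥ x := by
    ext x
    simp only [Function.comp_apply, ← dotProduct_mulVec, ← dotProduct_add]
    rfl
  have hvar : (v ᵥ* R) ⬝ᵥ (v ᵥ* R) = v ⬝ᵥ (R * Rᵀ) *ᵥ v := by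
    rw [← dotProduct_mulVec, ← mulVec_transpose, mulVec_mulVec]
  rw [gaussLaw, stdNormal, Measure.map_map (by fun_prop) (by fun_prop), hcomp,
    map_const_add_dotProduct_pi_gaussianReal, hvar]

section Schur

variable {k : ℕ} (Ω : Matrix (Fin (k + 1)) (Fin (k + 1)) ℝ)

noncomputable def residualWeights : Fin (k + 1) → ℝ := Fin.cons 1 (-coefFull Ω)

lemma residualWeights_dotProduct (y : Fin (k + 1) → ℝ) :
    residualWeights Ω ⬝ᵥ y = y 0 - ∑ j, coefFull Ω j * y j.succ := by
  simp [residualWeights, dotProduct, Fin.sum_univ_succ, sub_eq_add_neg]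

variable {Ω}

lemma submatrix_succ_mulVec_coefFull (hΩ : Ω.PosDef) :
    Ω.submatrix Fin.succ Fin.succ *ᵥ coefFull Ω = fun i => Ω i.succ 0 := by
  have hunit := (hΩ.submatrix (Fin.succ_injective k)).isUnit
  rw [coefFull,
    show Matrix.of (fun i j : Fin k => Ω i.succ j.succ) = Ω.submatrix Fin.succ Fin.succ from rfl,
    mulVec_mulVec, mul_nonsing_inv _ ((isUnit_iff_isUnit_det _).1 hunit), one_mulVec]

lemma mulVec_residualWeights_succ (hΩ : Ω.PosDef) (i : Fin k) :
    (Ω *ᵥ residualWeights Ω) i.succ = 0 := by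
  have h := congrFun (submatrix_succ_mulVec_coefFull hΩ) i
  simp only [mulVec, dotProduct, submatrix_apply] at h
  simp [residualWeights, mulVec, dotProduct, Fin.sum_univ_succ, h]

lemma residualWeights_dotProduct_mulVec (hΩ : Ω.PosDef) :
    residualWeights Ω ⬝ᵥ Ω *ᵥ residualWeights Ω = Ω 0 0 - omegaFull Ω := by
  simp only [residualWeights_dotProduct, mulVec_residualWeights_succ hΩ, mul_zero,
    Finset.sum_const_zero, sub_zero]
  simp [mulVec, dotProduct, Fin.sum_univ_succ, residualWeights, omegaFull, mul_comm,
    sub_eq_add_neg]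

lemma omegaFull_lt (hΩ : Ω.PosDef) : omegaFull Ω < Ω 0 0 := by
  have hv : residualWeights Ω ≠ 0 := fun h => by simpa [residualWeights] using congrFun h 0
  have h := hΩ.dotProduct_mulVec_pos hv
  rw [star_trivial, residualWeights_dotProduct_mulVec hΩ] at h
  linarith

end Schur

theorem stmt18_general (k : ℕ) (α : ℝ)
    (Ω : Matrix (Fin (k + 1)) (Fin (k + 1)) ℝ) (hpd : Ω.PosDef) (hdiag : ∀ i, Ω i i = 1)
    (R : Matrix (Fin (k + 1)) (Fin (k + 1)) ℝ) (hR : R * Rᵀ = Ω)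
    (zα : ℝ) (hzα : stdNormal (Set.Iic zα) = ENNReal.ofReal (1 - α))
    (β : ℝ) (δ : Fin k → ℝ) :
    Measure.map (fun y : Fin (k + 1) → ℝ => y 0 - ∑ j : Fin k, coefFull Ω j * y j.succ)
        (gaussLaw R β δ) =
      gaussianReal (β - ∑ j : Fin k, coefFull Ω j * δ j) (1 - omegaFull Ω).toNNReal ∧
    ((∀ j, 0 ≤ coefFull Ω j) → (∀ i, 0 ≤ δ i) →
      ENNReal.ofReal (1 - α) ≤
        gaussLaw R β δ {y : Fin (k + 1) → ℝ |
          y 0 - (∑ j : Fin k, coefFull Ω j * y j.succ) -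
            zα * Real.sqrt (1 - omegaFull Ω) ≤ β}) ∧
    ((∀ j, 0 ≤ coefFull Ω j) →
      gaussLaw R β 0 {y : Fin (k + 1) → ℝ |
          y 0 - (∑ j : Fin k, coefFull Ω j * y j.succ) -
            zα * Real.sqrt (1 - omegaFull Ω) ≤ β} = ENNReal.ofReal (1 - α)) := by
  set σ2 := 1 - omegaFull Ω
  have hσ2 : 0 < σ2 := sub_pos.2 (hdiag 0 ▸ omegaFull_lt hpd)
  have hlaw (δ' : Fin k → ℝ) :
      (gaussLaw R β δ').map (fun y => y 0 - ∑ j, coefFull Ω j * y j.succ) =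
        gaussianReal (β - ∑ j, coefFull Ω j * δ' j) σ2.toNNReal := by
    simp_rw [← residualWeights_dotProduct, map_dotProduct_gaussLaw, hR,
      residualWeights_dotProduct_mulVec hpd, hdiag 0, residualWeights_dotProduct]
    rfl
  have hcover (δ' : Fin k → ℝ) :
      gaussLaw R β δ' {y | y 0 - (∑ j, coefFull Ω j * y j.succ) - zα * √σ2 ≤ β} =
        gaussianReal (β - ∑ j, coefFull Ω j * δ' j) σ2.toNNReal (Set.Iic (β + √σ2 * zα)) := by
    rw [← hlaw, Measure.map_apply (by fun_prop) measurableSet_Iic]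
    congr 1
    ext y
    simp only [Set.mem_ofPred_eq, Set.mem_preimage, Set.mem_Iic]
    constructor <;> intro h <;> linarith
  have hquantile (m : ℝ) :
      gaussianReal m σ2.toNNReal (Set.Iic (m + √σ2 * zα)) = ENNReal.ofReal (1 - α) := by
    rw [← hzα, stdNormal, ← gaussianReal_Iic_add_sqrt_mul m zα (Real.toNNReal_pos.2 hσ2).ne',
      Real.coe_toNNReal _ hσ2.le]
  refine ⟨hlaw δ, fun hcoef hδ => ?_, fun _ => ?_⟩
  · have hshift : 0 ≤ ∑ j, coefFull Ω j * δ j :=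
      Finset.sum_nonneg fun j _ => mul_nonneg (hcoef j) (hδ j)
    rw [hcover, ← hquantile (β - ∑ j, coefFull Ω j * δ j)]
    exact measure_mono (Set.Iic_subset_Iic.2 (by linarith))
  · rw [hcover 0]
    simpa using hquantile β

/-- `Yβ - Ω_{βδ} Ω_{δδ}⁻¹ Yδ` is Gaussian with mean `β - Ω_{βδ} Ω_{δδ}⁻¹ δ` and
variance `1 - Ω_{βδ} Ω_{δδ}⁻¹ Ω_{δβ}`; consequently, if `Ω_{βδ} Ω_{δδ}⁻¹ ≥ 0` and `δ ≥ 0`,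
then `P(β ≥ Yβ - Ω_{βδ} Ω_{δδ}⁻¹ Yδ - z_{1-α} √(1 - Ω_{βδ} Ω_{δδ}⁻¹ Ω_{δβ})) ≥ 1 - α`,
with equality when `δ = 0`. -/
theorem stmt18 (k : ℕ) (α : ℝ) (hα : α ∈ Set.Ioo (0 : ℝ) 1)
    (Ω : Matrix (Fin (k + 1)) (Fin (k + 1)) ℝ) (hpd : Ω.PosDef) (hdiag : ∀ i, Ω i i = 1)
    (R : Matrix (Fin (k + 1)) (Fin (k + 1)) ℝ) (hR : R * Rᵀ = Ω)
    (zα : ℝ) (hzα : stdNormal (Set.Iic zα) = ENNReal.ofReal (1 - α))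
    (β : ℝ) (δ : Fin k → ℝ) :
    Measure.map (fun y : Fin (k + 1) → ℝ => y 0 - ∑ j : Fin k, coefFull Ω j * y j.succ)
        (gaussLaw R β δ) =
      gaussianReal (β - ∑ j : Fin k, coefFull Ω j * δ j) (1 - omegaFull Ω).toNNReal ∧
    ((∀ j, 0 ≤ coefFull Ω j) → (∀ i, 0 ≤ δ i) →
      ENNReal.ofReal (1 - α) ≤
        gaussLaw R β δ {y : Fin (k + 1) → ℝ |
          y 0 - (∑ j : Fin k, coefFull Ω j * y j.succ) -
            zα * Real.sqrt (1 - omegaFull Ω) ≤ β}) ∧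
    ((∀ j, 0 ≤ coefFull Ω j) →
      gaussLaw R β 0 {y : Fin (k + 1) → ℝ |
          y 0 - (∑ j : Fin k, coefFull Ω j * y j.succ) -
            zα * Real.sqrt (1 - omegaFull Ω) ≤ β} = ENNReal.ofReal (1 - α)) :=
  stmt18_general k α Ω hpd hdiag R hR zα hzα β δ
end
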